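/- Let (w_m)_{m∈ℤ} ∈ ℓ² be the Fourier coefficients of w ∈ L²(Γ_R) and suppose additionally Σ_m (1+m²)^{1/2} |w_m|² < ∞ (i.e., w ∈ H^{1/2}(Γ_R)). Then the DtN series S w = Σ_{m∈ℤ} k (H⁽²⁾_m'(kR)/H⁽²⁾_m(kR)) w_m e^{imθ} converges in H^{−1/2}(Γ_R), i.e., Σ_m (1+m²)^{−1/2} |k (H⁽²⁾_m'(kR)/H⁽²⁾_m(kR))|² |w_m|² < ∞, and S is a bounded linear map from H^{1/2}(Γ_R) to H^{−1/2}(Γ_R). -/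

import Mathlib

open MeasureTheory

/-- Bessel function of the first kind of real order `ν`, via the standard
integral representation (valid for `ρ > 0`). -/
noncomputable def besselJ (ν ρ : ℝ) : ℝ :=
  (1 / Real.pi) * (∫ τ in (0:ℝ)..Real.pi, Real.cos (ν * τ - ρ * Real.sin τ)) -
    (Real.sin (ν * Real.pi) / Real.pi) *
      (∫ t in Set.Ioi (0:ℝ), Real.exp (-(ρ * Real.sinh t) - ν * t))

/-- Bessel function of the second kind of real order `ν`, via the standard
integral representation (valid for `ρ > 0`). -/
noncomputable def besselY (ν ρ : ℝ) : ℝ :=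
  (1 / Real.pi) * (∫ τ in (0:ℝ)..Real.pi, Real.sin (ρ * Real.sin τ - ν * τ)) -
    (1 / Real.pi) *
      (∫ t in Set.Ioi (0:ℝ),
        (Real.exp (ν * t) + Real.exp (-(ν * t)) * Real.cos (ν * Real.pi)) *
          Real.exp (-(ρ * Real.sinh t)))

/-- Hankel function of the second kind `H⁽²⁾_ν(ρ) = J_ν(ρ) − i Y_ν(ρ)`. -/
noncomputable def hankel2 (ν ρ : ℝ) : ℂ :=
  (besselJ ν ρ : ℂ) - Complex.I * (besselY ν ρ : ℂ)

/-- Derivative of the Hankel function of the second kind in its argument. -/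
noncomputable def hankel2' (ν ρ : ℝ) : ℂ := deriv (hankel2 ν) ρ

/-- The DtN multiplier `ζ_m = k H⁽²⁾_m'(kR)/H⁽²⁾_m(kR)`. -/
noncomputable def dtnMult (k R : ℝ) (m : ℤ) : ℂ :=
  (k : ℂ) * (hankel2' (m : ℝ) (k * R) / hankel2 (m : ℝ) (k * R))

/-!
Write `ρ = kR` and `A(a) = ∫₀^∞ e^{a t - ρ sinh t} dt`. For integer `m` the integral
representations give `|Y_m(ρ)| ≥ (A(|m|) - A(0))/π - 1`, while differentiating under the integral
and integrating by parts (`∫₀^∞ cosh t e^{a t - ρ sinh t} dt = (1 + a A(a))/ρ`) give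
`|H_m'(ρ)| ≤ 2 + 2 (1 + |m| A(|m|))/(πρ)`. Since `A(a) → ∞`, for all but finitely many `m` this
yields `|H_m'(ρ)/H_m(ρ)| ≤ |H_m'(ρ)|/|Y_m(ρ)| = O(1 + |m|)`, hence `|ζ_m| ≤ C (1 + m²)^{1/2}` for
all `m`, and the weights `(1 + m²)^{∓1/2}` absorb the square of this growth.
-/

open Real Set Filter Topology

section ExpSinhIntegral

variable {ρ : ℝ}

lemma abs_sinh_le_cosh (t : ℝ) : |sinh t| ≤ cosh t :=
  abs_le.2 ⟨by linarith [cosh_add_sinh t, exp_pos t], (sinh_lt_cosh t).le⟩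

/-- From `sinh t ≥ t² / 4` on `[0, ∞)`, by completing the square in `t`. -/
lemma cosh_mul_exp_sub_mul_sinh_le (hρ : 0 < ρ) (a : ℝ) {t : ℝ} (ht : 0 ≤ t) :
    cosh t * exp (a * t - ρ * sinh t) ≤ exp ((a + 2) ^ 2 / ρ) * exp (-t) := by
  have hcosh : cosh t ≤ exp t := by
    rw [cosh_eq]; linarith [exp_le_exp.2 (neg_le_self ht)]
  have hsinh : t ^ 2 / 4 ≤ sinh t := by
    rw [sinh_eq]; linarith [quadratic_le_exp_of_nonneg ht, exp_le_one_iff.2 (neg_nonpos.2 ht)]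
  have hquad : (a + 2) * t - ρ * (t ^ 2 / 4) ≤ (a + 2) ^ 2 / ρ := by
    rw [le_div_iff₀ hρ]; nlinarith [sq_nonneg (ρ * t / 2 - (a + 2))]
  calc cosh t * exp (a * t - ρ * sinh t) ≤ exp t * exp (a * t - ρ * sinh t) := by gcongr
    _ = exp ((a + 2) * t - ρ * sinh t - t) := by rw [← exp_add]; ring_nf
    _ ≤ exp ((a + 2) ^ 2 / ρ + -t) := by
        gcongr; linarith [mul_le_mul_of_nonneg_left hsinh hρ.le]
    _ = exp ((a + 2) ^ 2 / ρ) * exp (-t) := exp_add _ _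

lemma integrableOn_cosh_mul_exp_sub_mul_sinh (hρ : 0 < ρ) (a : ℝ) :
    IntegrableOn (fun t => cosh t * exp (a * t - ρ * sinh t)) (Ioi 0) := by
  refine Integrable.mono' ((exp_neg_integrableOn_Ioi 0 one_pos).const_mul (exp ((a + 2) ^ 2 / ρ)))
    (by fun_prop : Continuous _).aestronglyMeasurable ?_
  filter_upwards [ae_restrict_mem measurableSet_Ioi] with t ht
  rw [norm_of_nonneg (by positivity), neg_one_mul]
  exact cosh_mul_exp_sub_mul_sinh_le hρ a (le_of_lt ht)

lemma integrableOn_Ioi_of_abs_le_cosh_mul_exp {f : ℝ → ℝ} (hf : Continuous f) (hρ : 0 < ρ)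
    {a c : ℝ} (hle : ∀ t > 0, |f t| ≤ c * (cosh t * exp (a * t - ρ * sinh t))) :
    IntegrableOn f (Ioi 0) :=
  Integrable.mono' ((integrableOn_cosh_mul_exp_sub_mul_sinh hρ a).const_mul c)
    hf.aestronglyMeasurable ((ae_restrict_mem measurableSet_Ioi).mono hle)

lemma integrableOn_exp_sub_mul_sinh (hρ : 0 < ρ) (a : ℝ) :
    IntegrableOn (fun t => exp (a * t - ρ * sinh t)) (Ioi 0) :=
  integrableOn_Ioi_of_abs_le_cosh_mul_exp (by fun_prop) hρ (c := 1) fun t _ => by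
    rw [abs_of_pos (exp_pos _), one_mul]
    exact le_mul_of_one_le_left (exp_pos _).le (one_le_cosh t)

lemma integrableOn_sinh_mul_exp_sub_mul_sinh (hρ : 0 < ρ) (a : ℝ) :
    IntegrableOn (fun t => sinh t * exp (a * t - ρ * sinh t)) (Ioi 0) :=
  integrableOn_Ioi_of_abs_le_cosh_mul_exp (by fun_prop) hρ (c := 1) fun t _ => by
    rw [abs_mul, abs_of_pos (exp_pos _), one_mul]
    exact mul_le_mul_of_nonneg_right (abs_sinh_le_cosh t) (exp_pos _).le

lemma tendsto_exp_sub_mul_sinh_atTop (hρ : 0 < ρ) (a : ℝ) :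
    Tendsto (fun t => exp (a * t - ρ * sinh t)) atTop (𝓝 0) := by
  refine squeeze_zero' (.of_forall fun t => (exp_pos _).le) ?_
    (by simpa using tendsto_exp_neg_atTop_nhds_zero.const_mul (exp ((a + 2) ^ 2 / ρ)))
  filter_upwards [eventually_ge_atTop 0] with t ht
  exact (le_mul_of_one_le_left (exp_pos _).le (one_le_cosh t)).trans
    (cosh_mul_exp_sub_mul_sinh_le hρ a ht)

noncomputable def expSinhIntegral (ρ a : ℝ) : ℝ := ∫ t in Ioi 0, exp (a * t - ρ * sinh t)

lemma expSinhIntegral_nonneg (ρ a : ℝ) : 0 ≤ expSinhIntegral ρ a :=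
  setIntegral_nonneg measurableSet_Ioi fun _ _ => (exp_pos _).le

lemma expSinhIntegral_mono (hρ : 0 < ρ) : Monotone (expSinhIntegral ρ) := fun a b hab =>
  setIntegral_mono_on (integrableOn_exp_sub_mul_sinh hρ a) (integrableOn_exp_sub_mul_sinh hρ b)
    measurableSet_Ioi fun t ht => by gcongr; exact le_of_lt ht

lemma exp_div_two_le_expSinhIntegral (hρ : 0 < ρ) {a : ℝ} (ha : 0 ≤ a) :
    exp (a / 2 - ρ * sinh 1) / 2 ≤ expSinhIntegral ρ a := by
  have hsub : Ioc (1 / 2 : ℝ) 1 ⊆ Ioi 0 := fun t ht => lt_trans (by norm_num) ht.1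
  have hint := integrableOn_exp_sub_mul_sinh hρ a
  have hlower : exp (a / 2 - ρ * sinh 1) * volume.real (Ioc (1 / 2 : ℝ) 1) ≤
      ∫ t in Ioc (1 / 2 : ℝ) 1, exp (a * t - ρ * sinh t) :=
    setIntegral_ge_of_const_le_real measurableSet_Ioc (by simp) (fun t ht => by
      have hsinh : sinh t ≤ sinh 1 := sinh_le_sinh.2 ht.2
      gcongr exp ?_
      nlinarith [ht.1]) (hint.mono_set hsub)
  rw [Real.volume_real_Ioc_of_le (by norm_num)] at hlower
  calc exp (a / 2 - ρ * sinh 1) / 2 = exp (a / 2 - ρ * sinh 1) * (1 - 1 / 2) := by ring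
    _ ≤ ∫ t in Ioc (1 / 2 : ℝ) 1, exp (a * t - ρ * sinh t) := hlower
    _ ≤ expSinhIntegral ρ a :=
      setIntegral_mono_set hint (.of_forall fun _ => (exp_pos _).le) hsub.eventuallyLE

lemma tendsto_expSinhIntegral_atTop (hρ : 0 < ρ) : Tendsto (expSinhIntegral ρ) atTop atTop := by
  refine tendsto_atTop_mono' _ ((eventually_ge_atTop 0).mono fun a ha =>
    exp_div_two_le_expSinhIntegral hρ ha) ?_
  exact (tendsto_exp_atTop.comp ((tendsto_id.atTop_div_const two_pos).atTop_add
    tendsto_const_nhds)).atTop_div_const two_pos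

/-- Integrate `d/dt (-e^{a t - ρ sinh t}) = (ρ cosh t - a) e^{a t - ρ sinh t}`. -/
lemma integral_cosh_mul_exp_sub_mul_sinh (hρ : 0 < ρ) (a : ℝ) :
    ∫ t in Ioi 0, cosh t * exp (a * t - ρ * sinh t) = (1 + a * expSinhIntegral ρ a) / ρ := by
  have hderiv : ∀ t ∈ Ici (0 : ℝ), HasDerivAt (fun t => -exp (a * t - ρ * sinh t))
      ((ρ * cosh t - a) * exp (a * t - ρ * sinh t)) t := fun t _ => by
    have hexponent : HasDerivAt (fun t => a * t - ρ * sinh t) (a - ρ * cosh t) t :=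
      (((hasDerivAt_id' t).const_mul a).sub ((hasDerivAt_sinh t).const_mul ρ)).congr_deriv
        (by ring)
    exact hexponent.exp.neg.congr_deriv (by ring)
  have hint : IntegrableOn (fun t => (ρ * cosh t - a) * exp (a * t - ρ * sinh t)) (Ioi 0) :=
    integrableOn_Ioi_of_abs_le_cosh_mul_exp (by fun_prop) hρ (c := ρ + |a|) fun t _ => by
      have hcoef : |ρ * cosh t - a| ≤ (ρ + |a|) * cosh t := by
        rw [abs_le]; constructor <;>
          nlinarith [one_le_cosh t, abs_nonneg a, le_abs_self a, neg_abs_le a]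
      rw [abs_mul, abs_of_pos (exp_pos _), ← mul_assoc]
      exact mul_le_mul_of_nonneg_right hcoef (exp_pos _).le
  have hibp := integral_Ioi_of_hasDerivAt_of_tendsto' hderiv hint
    (by simpa using (tendsto_exp_sub_mul_sinh_atTop hρ a).neg)
  have hsplit : ∫ t in Ioi 0, (ρ * cosh t - a) * exp (a * t - ρ * sinh t) =
      ρ * (∫ t in Ioi 0, cosh t * exp (a * t - ρ * sinh t)) - a * expSinhIntegral ρ a := by
    rw [expSinhIntegral, ← integral_const_mul ρ, ← integral_const_mul a, ← integral_sub
      ((integrableOn_cosh_mul_exp_sub_mul_sinh hρ a).const_mul ρ)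
      ((integrableOn_exp_sub_mul_sinh hρ a).const_mul a)]
    congr 1; ext t; ring
  simp only [mul_zero, sinh_zero, sub_zero, exp_zero, zero_sub, neg_neg] at hibp
  rw [eq_div_iff hρ.ne', mul_comm]
  linarith

lemma integral_sinh_mul_exp_sub_mul_sinh_le (hρ : 0 < ρ) (a : ℝ) :
    ∫ t in Ioi 0, sinh t * exp (a * t - ρ * sinh t) ≤ (1 + a * expSinhIntegral ρ a) / ρ := by
  rw [← integral_cosh_mul_exp_sub_mul_sinh hρ a]
  exact setIntegral_mono_on (integrableOn_sinh_mul_exp_sub_mul_sinh hρ a)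
    (integrableOn_cosh_mul_exp_sub_mul_sinh hρ a) measurableSet_Ioi fun t _ =>
      mul_le_mul_of_nonneg_right (sinh_lt_cosh t).le (exp_pos _).le

end ExpSinhIntegral

section Bessel

variable {ρ : ℝ}

lemma abs_one_div_pi_mul_integral_le_one {f : ℝ → ℝ} (hf : ∀ τ, |f τ| ≤ 1) :
    |1 / π * ∫ τ in 0..π, f τ| ≤ 1 := by
  have h := intervalIntegral.norm_integral_le_of_norm_le_const (a := 0) (b := π) (C := 1)
    (f := f) fun τ _ => hf τ
  rw [abs_mul, abs_of_pos (by positivity), one_div, inv_mul_le_iff₀ pi_pos]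
  simpa [abs_of_pos pi_pos] using h

lemma hasDerivAt_integral_comp_mul_sin_sub {φ φ' : ℝ → ℝ} (hφ : ∀ y, HasDerivAt φ (φ' y) y)
    (hφ' : Continuous φ') (hφ'_le : ∀ y, |φ' y| ≤ 1) (ν ρ : ℝ) :
    HasDerivAt (fun x => ∫ τ in 0..π, φ (x * sin τ - ν * τ))
      (∫ τ in 0..π, sin τ * φ' (ρ * sin τ - ν * τ)) ρ := by
  have hφc : Continuous φ := continuous_iff_continuousAt.2 fun y => (hφ y).continuousAt
  refine (intervalIntegral.hasDerivAt_integral_of_dominated_loc_of_deriv_le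
    (F := fun x τ => φ (x * sin τ - ν * τ)) (F' := fun x τ => sin τ * φ' (x * sin τ - ν * τ))
    (bound := fun _ => 1) (Metric.ball_mem_nhds ρ one_pos)
    (.of_forall fun x => (by fun_prop : Continuous _).aestronglyMeasurable)
    ((by fun_prop : Continuous _).intervalIntegrable _ _)
    (by fun_prop : Continuous _).aestronglyMeasurable
    (.of_forall fun τ _ x _ => ?_) intervalIntegrable_const (.of_forall fun τ _ x _ => ?_)).2
  · rw [norm_mul]
    exact mul_le_one₀ (abs_sin_le_one τ) (norm_nonneg _) (hφ'_le _)
  · exact ((hφ _).comp x ((hasDerivAt_mul_const (sin τ)).sub_const (ν * τ))).congr_deriv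
      (mul_comm _ _)

lemma besselJ_intCast (m : ℤ) :
    besselJ m = fun ρ => 1 / π * ∫ τ in 0..π, cos (ρ * sin τ - m * τ) := by
  funext ρ
  simp only [besselJ, sin_int_mul_pi, zero_div, zero_mul, sub_zero]
  congr 2; funext τ; rw [← cos_neg, neg_sub]

lemma exists_hasDerivAt_besselJ_intCast (m : ℤ) (ρ : ℝ) :
    ∃ J', HasDerivAt (besselJ m) J' ρ ∧ |J'| ≤ 1 := by
  rw [besselJ_intCast]
  refine ⟨_, (hasDerivAt_integral_comp_mul_sin_sub (φ' := fun y => -sin y) hasDerivAt_cos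
    (by fun_prop) (fun y => by simpa using abs_sin_le_one y) m ρ).const_mul (1 / π),
    abs_one_div_pi_mul_integral_le_one fun τ => ?_⟩
  rw [abs_mul, abs_neg]
  exact mul_le_one₀ (abs_sin_le_one τ) (abs_nonneg _) (abs_sin_le_one _)

noncomputable def besselYKernel (ν c t : ℝ) : ℝ := exp (ν * t) + exp (-(ν * t)) * c

lemma besselY_eq (ν ρ : ℝ) : besselY ν ρ = 1 / π * (∫ τ in 0..π, sin (ρ * sin τ - ν * τ)) -
    1 / π * ∫ t in Ioi 0, besselYKernel ν (cos (ν * π)) t * exp (-(ρ * sinh t)) :=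
  rfl

lemma abs_besselYKernel_mul_exp_le {ν c t : ℝ} (hc : |c| ≤ 1) (ht : 0 ≤ t) (x : ℝ) :
    |besselYKernel ν c t * exp (-(x * sinh t))| ≤ 2 * exp (|ν| * t - x * sinh t) := by
  have hpos : exp (ν * t) ≤ exp (|ν| * t) := by gcongr; exact le_abs_self ν
  have hneg : exp (-(ν * t)) ≤ exp (|ν| * t) := by
    gcongr; rw [← neg_mul]; gcongr; exact neg_le_abs ν
  have hkernel : |besselYKernel ν c t| ≤ 2 * exp (|ν| * t) := by
    calc |besselYKernel ν c t| ≤ exp (ν * t) + exp (-(ν * t)) * |c| := by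
          rw [besselYKernel]
          refine (abs_add_le _ _).trans ?_
          rw [abs_of_pos (exp_pos _), abs_mul, abs_of_pos (exp_pos _)]
      _ ≤ 2 * exp (|ν| * t) := by nlinarith [exp_pos (-(ν * t))]
  rw [abs_mul, abs_of_pos (exp_pos _), sub_eq_add_neg, exp_add, ← mul_assoc]
  exact mul_le_mul_of_nonneg_right hkernel (exp_pos _).le

lemma abs_besselYKernel_mul_sinh_mul_exp_le {ν c t : ℝ} (hc : |c| ≤ 1) (ht : 0 ≤ t) (x : ℝ) :
    |besselYKernel ν c t * (sinh t * exp (-(x * sinh t)))| ≤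
      2 * (sinh t * exp (|ν| * t - x * sinh t)) := by
  rw [mul_left_comm, abs_mul, abs_of_nonneg (sinh_nonneg_iff.2 ht), mul_left_comm]
  exact mul_le_mul_of_nonneg_left (abs_besselYKernel_mul_exp_le hc ht x) (sinh_nonneg_iff.2 ht)

lemma hasDerivAt_integral_besselYKernel_mul_exp (hρ : 0 < ρ) (ν : ℝ) {c : ℝ} (hc : |c| ≤ 1) :
    HasDerivAt (fun x => ∫ t in Ioi 0, besselYKernel ν c t * exp (-(x * sinh t)))
      (∫ t in Ioi 0, -(besselYKernel ν c t * (sinh t * exp (-(ρ * sinh t))))) ρ := by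
  have hcont : ∀ x, Continuous fun t => besselYKernel ν c t * exp (-(x * sinh t)) := fun x => by
    unfold besselYKernel; fun_prop
  refine (hasDerivAt_integral_of_dominated_loc_of_deriv_le
    (F' := fun x t => -(besselYKernel ν c t * (sinh t * exp (-(x * sinh t)))))
    (bound := fun t => 2 * (cosh t * exp (|ν| * t - ρ / 2 * sinh t)))
    (Ioi_mem_nhds (half_lt_self hρ)) (.of_forall fun x => (hcont x).aestronglyMeasurable)
    (integrableOn_Ioi_of_abs_le_cosh_mul_exp (hcont ρ) hρ (a := |ν|) (c := 2) fun t ht =>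
      (abs_besselYKernel_mul_exp_le hc ht.le ρ).trans (mul_le_mul_of_nonneg_left
        (le_mul_of_one_le_left (exp_pos _).le (one_le_cosh t)) two_pos.le))
    (by unfold besselYKernel; fun_prop : Continuous _).aestronglyMeasurable ?_
    ((integrableOn_cosh_mul_exp_sub_mul_sinh (half_pos hρ) |ν|).const_mul 2) ?_).2
  · filter_upwards [ae_restrict_mem measurableSet_Ioi] with t ht x hx
    have hsinh : 0 ≤ sinh t := sinh_nonneg_iff.2 ht.le
    rw [norm_neg, Real.norm_eq_abs]
    refine (abs_besselYKernel_mul_sinh_mul_exp_le hc ht.le x).trans ?_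
    gcongr
    · exact (sinh_lt_cosh t).le
    · exact hx.le
  · refine .of_forall fun t x _ => ?_
    have hexponent : HasDerivAt (fun x => -(x * sinh t)) (-sinh t) x :=
      (hasDerivAt_mul_const (sinh t)).neg
    exact (hexponent.exp.const_mul (besselYKernel ν c t)).congr_deriv (by ring)

lemma abs_integral_besselYKernel_mul_sinh_mul_exp_le (hρ : 0 < ρ) (ν : ℝ) {c : ℝ} (hc : |c| ≤ 1) :
    |∫ t in Ioi 0, -(besselYKernel ν c t * (sinh t * exp (-(ρ * sinh t))))| ≤
      2 * ((1 + |ν| * expSinhIntegral ρ |ν|) / ρ) := by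
  have hbound := norm_integral_le_of_norm_le
    ((integrableOn_sinh_mul_exp_sub_mul_sinh hρ |ν|).const_mul 2)
    (f := fun t => -(besselYKernel ν c t * (sinh t * exp (-(ρ * sinh t)))))
    (by filter_upwards [ae_restrict_mem measurableSet_Ioi] with t ht
        rw [norm_neg, Real.norm_eq_abs]
        exact abs_besselYKernel_mul_sinh_mul_exp_le hc ht.le ρ)
  rw [Real.norm_eq_abs, integral_const_mul] at hbound
  exact hbound.trans (by gcongr; exact integral_sinh_mul_exp_sub_mul_sinh_le hρ |ν|)

lemma exists_hasDerivAt_besselY (hρ : 0 < ρ) (ν : ℝ) :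
    ∃ Y', HasDerivAt (besselY ν) Y' ρ ∧
      |Y'| ≤ 1 + 2 * (1 + |ν| * expSinhIntegral ρ |ν|) / (π * ρ) := by
  have hc : |cos (ν * π)| ≤ 1 := abs_cos_le_one _
  have hY : besselY ν = fun x => 1 / π * (∫ τ in 0..π, sin (x * sin τ - ν * τ)) -
      1 / π * ∫ t in Ioi 0, besselYKernel ν (cos (ν * π)) t * exp (-(x * sinh t)) :=
    funext (besselY_eq ν)
  rw [hY]
  refine ⟨_, ((hasDerivAt_integral_comp_mul_sin_sub hasDerivAt_sin continuous_cos abs_cos_le_one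
    ν ρ).const_mul (1 / π)).sub
    ((hasDerivAt_integral_besselYKernel_mul_exp hρ ν hc).const_mul (1 / π)), ?_⟩
  have hosc := abs_one_div_pi_mul_integral_le_one (f := fun τ => sin τ * cos (ρ * sin τ - ν * τ))
    fun τ => by rw [abs_mul]; exact mul_le_one₀ (abs_sin_le_one τ) (abs_nonneg _) (abs_cos_le_one _)
  have hexp := abs_integral_besselYKernel_mul_sinh_mul_exp_le hρ ν hc
  refine (abs_sub _ _).trans (add_le_add hosc ?_)
  rw [abs_mul, abs_of_pos (by positivity : (0 : ℝ) < 1 / π)]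
  calc _ ≤ 1 / π * (2 * ((1 + |ν| * expSinhIntegral ρ |ν|) / ρ)) := by gcongr
    _ = 2 * (1 + |ν| * expSinhIntegral ρ |ν|) / (π * ρ) := by field_simp

lemma integral_besselYKernel_mul_exp (hρ : 0 < ρ) (ν c : ℝ) :
    ∫ t in Ioi 0, besselYKernel ν c t * exp (-(ρ * sinh t)) =
      expSinhIntegral ρ ν + c * expSinhIntegral ρ (-ν) := by
  have hsplit : (fun t => besselYKernel ν c t * exp (-(ρ * sinh t))) =
      fun t => exp (ν * t - ρ * sinh t) + c * exp (-ν * t - ρ * sinh t) := by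
    ext t; simp only [besselYKernel, sub_eq_add_neg, exp_add, neg_mul]; ring
  rw [hsplit, integral_add (integrableOn_exp_sub_mul_sinh hρ ν)
    ((integrableOn_exp_sub_mul_sinh hρ (-ν)).const_mul c), integral_const_mul]
  rfl

lemma expSinhIntegral_sub_le_abs_add (hρ : 0 < ρ) (ν : ℝ) {c : ℝ} (hc : |c| = 1) :
    expSinhIntegral ρ |ν| - expSinhIntegral ρ 0 ≤
      |expSinhIntegral ρ ν + c * expSinhIntegral ρ (-ν)| := by
  have hsmall : expSinhIntegral ρ (-|ν|) ≤ expSinhIntegral ρ 0 :=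
    expSinhIntegral_mono hρ (neg_nonpos.2 (abs_nonneg ν))
  have hsum : |expSinhIntegral ρ ν - expSinhIntegral ρ (-ν)| ≤
      |expSinhIntegral ρ ν + c * expSinhIntegral ρ (-ν)| := by
    rcases (abs_eq zero_le_one).1 hc with rfl | rfl
    · have h₁ := expSinhIntegral_nonneg ρ ν
      have h₂ := expSinhIntegral_nonneg ρ (-ν)
      rw [one_mul, abs_of_nonneg (add_nonneg h₁ h₂)]
      exact abs_sub_le_iff.2 ⟨by linarith, by linarith⟩
    · rw [neg_one_mul, ← sub_eq_add_neg]
  have hdiff : expSinhIntegral ρ |ν| - expSinhIntegral ρ (-|ν|) ≤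
      |expSinhIntegral ρ ν - expSinhIntegral ρ (-ν)| := by
    rcases abs_choice ν with h | h <;> rw [h]
    · exact le_abs_self _
    · rw [neg_neg, abs_sub_comm]; exact le_abs_self _
  linarith

lemma abs_besselY_intCast_ge (m : ℤ) (hρ : 0 < ρ) :
    (expSinhIntegral ρ |(m : ℝ)| - expSinhIntegral ρ 0) / π - 1 ≤ |besselY m ρ| := by
  have hosc := abs_one_div_pi_mul_integral_le_one (f := fun τ => sin (ρ * sin τ - m * τ))
    fun τ => abs_sin_le_one _
  have hexp := expSinhIntegral_sub_le_abs_add hρ m (abs_cos_int_mul_pi m)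
  rw [besselY_eq, integral_besselYKernel_mul_exp hρ]
  have hexp' : (expSinhIntegral ρ |(m : ℝ)| - expSinhIntegral ρ 0) / π ≤
      |1 / π * (expSinhIntegral ρ m + cos (m * π) * expSinhIntegral ρ (-m))| := by
    rw [abs_mul, abs_of_pos (one_div_pos.2 pi_pos), one_div_mul_eq_div]
    gcongr
  have htriangle := abs_sub_abs_le_abs_sub
    (1 / π * (expSinhIntegral ρ m + cos (m * π) * expSinhIntegral ρ (-m)))
    (1 / π * ∫ τ in 0..π, sin (ρ * sin τ - m * τ))
  rw [abs_sub_comm] at htriangle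
  linarith

end Bessel

section Hankel

variable {ρ : ℝ}

lemma norm_hankel2'_intCast_le (m : ℤ) (hρ : 0 < ρ) :
    ‖hankel2' m ρ‖ ≤ 2 + 2 * (1 + |(m : ℝ)| * expSinhIntegral ρ |(m : ℝ)|) / (π * ρ) := by
  obtain ⟨J', hJ, hJ'⟩ := exists_hasDerivAt_besselJ_intCast m ρ
  obtain ⟨Y', hY, hY'⟩ := exists_hasDerivAt_besselY hρ m
  have hH : HasDerivAt (hankel2 m) (J' - Complex.I * Y') ρ :=
    hJ.ofReal_comp.sub (hY.ofReal_comp.const_mul Complex.I)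
  rw [hankel2', hH.deriv]
  calc ‖(J' : ℂ) - Complex.I * Y'‖ ≤ |J'| + |Y'| := by
        refine (norm_sub_le _ _).trans_eq ?_
        rw [norm_mul, Complex.norm_I, one_mul, Complex.norm_real, Complex.norm_real,
          Real.norm_eq_abs, Real.norm_eq_abs]
    _ ≤ _ := by linarith

lemma abs_besselY_le_norm_hankel2 (ν ρ : ℝ) : |besselY ν ρ| ≤ ‖hankel2 ν ρ‖ := by
  simpa [hankel2] using Complex.abs_im_le_norm (hankel2 ν ρ)

lemma norm_hankel2'_div_norm_hankel2_le (m : ℤ) (hρ : 0 < ρ)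
    (hlarge : 2 * (expSinhIntegral ρ 0 + π) ≤ expSinhIntegral ρ |(m : ℝ)|) :
    ‖hankel2' m ρ‖ / ‖hankel2 m ρ‖ ≤ (4 * π + 4 / ρ) * (1 + |(m : ℝ)|) := by
  set A := expSinhIntegral ρ |(m : ℝ)|
  have hA₀ := expSinhIntegral_nonneg ρ 0
  have hA : 1 ≤ A := by linarith [pi_gt_three]
  have hn := abs_nonneg (m : ℝ)
  have hH : A / (2 * π) ≤ ‖hankel2 m ρ‖ :=
    calc A / (2 * π) ≤ (2 * (A - expSinhIntegral ρ 0) - 2 * π) / (2 * π) := by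
          gcongr; linarith
      _ = (A - expSinhIntegral ρ 0) / π - 1 := by field_simp
      _ ≤ |besselY m ρ| := abs_besselY_intCast_ge m hρ
      _ ≤ ‖hankel2 m ρ‖ := abs_besselY_le_norm_hankel2 _ _
  have hH' : ‖hankel2' m ρ‖ ≤ (4 * π + 4 / ρ) * (1 + |(m : ℝ)|) * (A / (2 * π)) := by
    have hexpand : (4 * π + 4 / ρ) * (1 + |(m : ℝ)|) * (A / (2 * π)) =
        2 * ((1 + |(m : ℝ)|) * A) + 2 * ((1 + |(m : ℝ)|) * A) / (π * ρ) := by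
      field_simp; ring
    rw [hexpand]
    refine (norm_hankel2'_intCast_le m hρ).trans ?_
    gcongr <;> nlinarith
  exact div_le_of_le_mul₀ (norm_nonneg _) (by positivity) (hH'.trans (by gcongr))

end Hankel

lemma one_add_abs_le_two_mul_sqrt (x : ℝ) : 1 + |x| ≤ 2 * √(1 + x ^ 2) := by
  rw [← div_le_iff₀' two_pos, Real.le_sqrt (by positivity) (by positivity)]
  nlinarith [sq_nonneg (|x| - 1), sq_abs x]

lemma exists_pos_norm_dtnMult_le {k R : ℝ} (hk : 0 < k) (hR : 0 < R) :
    ∃ C > 0, ∀ m : ℤ, ‖dtnMult k R m‖ ≤ C * √(1 + (m : ℝ) ^ 2) := by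
  have hρ : 0 < k * R := mul_pos hk hR
  have hlarge : ∀ᶠ m : ℤ in cofinite,
      2 * (expSinhIntegral (k * R) 0 + π) ≤ expSinhIntegral (k * R) |(m : ℝ)| :=
    ((tendsto_expSinhIntegral_atTop hρ).comp
      (tendsto_norm_cocompact_atTop.comp Int.tendsto_coe_cofinite)).eventually_ge_atTop _
  have hratio : ∀ᶠ m : ℤ in cofinite,
      ‖dtnMult k R m‖ / √(1 + (m : ℝ) ^ 2) ≤ 2 * k * (4 * π + 4 / (k * R)) := by
    filter_upwards [hlarge] with m hm
    rw [div_le_iff₀ (by positivity)]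
    calc ‖dtnMult k R m‖ = k * (‖hankel2' m (k * R)‖ / ‖hankel2 m (k * R)‖) := by
          rw [dtnMult, norm_mul, norm_div, Complex.norm_real, Real.norm_eq_abs, abs_of_pos hk]
      _ ≤ k * ((4 * π + 4 / (k * R)) * (1 + |(m : ℝ)|)) := by
          gcongr; exact norm_hankel2'_div_norm_hankel2_le m hρ hm
      _ ≤ k * ((4 * π + 4 / (k * R)) * (2 * √(1 + (m : ℝ) ^ 2))) := by
          gcongr; exact one_add_abs_le_two_mul_sqrt _
      _ = _ := by ring
  obtain ⟨B, hB⟩ := (isBoundedUnder_of_eventually_le hratio).bddAbove_range_of_cofinite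
  refine ⟨max B 1, by positivity, fun m => ?_⟩
  rw [← div_le_iff₀ (by positivity)]
  exact (hB (mem_range_self m)).trans (le_max_left _ _)

lemma inv_mul_norm_sq_mul_le {E : Type*} [SeminormedAddCommGroup E] {σ C x : ℝ} {z : E}
    (hσ : 0 < σ) (hz : ‖z‖ ≤ C * σ) (hx : 0 ≤ x) :
    σ⁻¹ * ‖z‖ ^ 2 * x ≤ C ^ 2 * (σ * x) := by
  have hsq : ‖z‖ ^ 2 ≤ (C * σ) ^ 2 := pow_le_pow_left₀ (norm_nonneg z) hz 2
  calc σ⁻¹ * ‖z‖ ^ 2 * x ≤ σ⁻¹ * (C * σ) ^ 2 * x := by gcongr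
    _ = C ^ 2 * (σ * x) := by field_simp

/-- For `w ∈ H^{1/2}(Γ_R)` (i.e. `Σ_m (1+m²)^{1/2}|w_m|² < ∞`) the DtN series converges
in `H^{−1/2}(Γ_R)`, i.e. `Σ_m (1+m²)^{−1/2} |ζ_m|² |w_m|² < ∞`, and the DtN map `S` is a
bounded linear map from `H^{1/2}(Γ_R)` to `H^{−1/2}(Γ_R)`. -/
theorem dtn_bounded_H_half (k R : ℝ) (hk : 0 < k) (hR : 0 < R) :
    (∀ w : ℤ → ℂ, Summable (fun m : ℤ => Real.sqrt (1 + (m : ℝ) ^ 2) * ‖w m‖ ^ 2) →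
        Summable (fun m : ℤ =>
          (Real.sqrt (1 + (m : ℝ) ^ 2))⁻¹ * ‖dtnMult k R m‖ ^ 2 * ‖w m‖ ^ 2)) ∧
      ∃ C : ℝ, 0 < C ∧
        ∀ w : ℤ → ℂ, Summable (fun m : ℤ => Real.sqrt (1 + (m : ℝ) ^ 2) * ‖w m‖ ^ 2) →
          (∑' m : ℤ,
              (Real.sqrt (1 + (m : ℝ) ^ 2))⁻¹ * ‖dtnMult k R m‖ ^ 2 * ‖w m‖ ^ 2) ≤
            C * ∑' m : ℤ, Real.sqrt (1 + (m : ℝ) ^ 2) * ‖w m‖ ^ 2 := by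
  obtain ⟨C, hC, hζ⟩ := exists_pos_norm_dtnMult_le hk hR
  have hterm (w : ℤ → ℂ) (m : ℤ) :
      (√(1 + (m : ℝ) ^ 2))⁻¹ * ‖dtnMult k R m‖ ^ 2 * ‖w m‖ ^ 2 ≤
        C ^ 2 * (√(1 + (m : ℝ) ^ 2) * ‖w m‖ ^ 2) :=
    inv_mul_norm_sq_mul_le (by positivity) (hζ m) (by positivity)
  have hsummable (w : ℤ → ℂ) (hw : Summable fun m : ℤ => √(1 + (m : ℝ) ^ 2) * ‖w m‖ ^ 2) :
      Summable fun m : ℤ => (√(1 + (m : ℝ) ^ 2))⁻¹ * ‖dtnMult k R m‖ ^ 2 * ‖w m‖ ^ 2 :=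
    .of_nonneg_of_le (fun m => by positivity) (hterm w) (hw.mul_left _)
  refine ⟨hsummable, C ^ 2, by positivity, fun w hw => ?_⟩
  rw [← tsum_mul_left]
  exact (hsummable w hw).tsum_le_tsum (hterm w) (hw.mul_left _)
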